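/- Let E'(r,t) denote the group of invertible elements of the monoid G'(r,t), i.e., the triples (x,y,z) with x a unit of ℤ/2^{r+1}. The map φ : E'(r,t) → (ℤ/2^{t+1})ˣ × (ℤ/2^{r+1})ˣ defined by φ(x,y,z) = (π(x) + μ(z), x) is a surjective group homomorphism whose kernel equals {(1,y,0) : y ∈ ℤ/2^{t+1}}, a cyclic subgroup of order 2^{t+1} generated by (1,1,0). Moreover, the subset H' = {(x,0,z) : x ∈ (ℤ/2^{r+1})ˣ, z ∈ ℤ/2^t} is a subgroup of E'(r,t) and φ restricted to H' is a group isomorphism onto (ℤ/2^{t+1})ˣ × (ℤ/2^{r+1})ˣ; in particular the short exact sequence ℤ/2^{t+1} ↪ E'(r,t) ↠ (ℤ/2^{t+1})ˣ × (ℤ/2^{r+1})ˣ splits. -/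

import Mathlib

/-- The composition law of `[C,C]` for the elementary Chang complex `C = C^{n+2,t}_r`
with `t < r`, in coordinates `ℤ/2^{r+1} × ℤ/2^{t+1} × ℤ/2^t`. -/
def changOp' (r t : ℕ) (htr : t ≤ r)
    (a b : ZMod (2 ^ (r + 1)) × ZMod (2 ^ (t + 1)) × ZMod (2 ^ t)) :
    ZMod (2 ^ (r + 1)) × ZMod (2 ^ (t + 1)) × ZMod (2 ^ t) :=
  (a.1 * b.1,
   ZMod.castHom (pow_dvd_pow 2 (by omega : t + 1 ≤ r + 1)) (ZMod (2 ^ (t + 1))) a.1 * b.2.1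
     + ZMod.castHom (pow_dvd_pow 2 (by omega : t + 1 ≤ r + 1)) (ZMod (2 ^ (t + 1))) b.1 * a.2.1
     + b.2.1 * (2 * (ZMod.cast a.2.2 : ZMod (2 ^ (t + 1)))),
   ZMod.castHom (pow_dvd_pow 2 (by omega : t ≤ r + 1)) (ZMod (2 ^ t)) a.1 * b.2.2
     + ZMod.castHom (pow_dvd_pow 2 (by omega : t ≤ r + 1)) (ZMod (2 ^ t)) b.1 * a.2.2
     + 2 * a.2.2 * b.2.2)

/-- The set `E'(r,t)` of invertible elements of the monoid `G'(r,t)`. -/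
def changE' (r t : ℕ) (htr : t ≤ r) :
    Set (ZMod (2 ^ (r + 1)) × ZMod (2 ^ (t + 1)) × ZMod (2 ^ t)) :=
  {a | ∃ b, changOp' r t htr a b = (1, 0, 0) ∧ changOp' r t htr b a = (1, 0, 0)}

/-- The map `φ(x,y,z) = (π(x) + μ(z), x)`. -/
def changPhi' (r t : ℕ) (htr : t ≤ r)
    (a : ZMod (2 ^ (r + 1)) × ZMod (2 ^ (t + 1)) × ZMod (2 ^ t)) :
    ZMod (2 ^ (t + 1)) × ZMod (2 ^ (r + 1)) :=
  (ZMod.castHom (pow_dvd_pow 2 (by omega : t + 1 ≤ r + 1)) (ZMod (2 ^ (t + 1))) a.1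
     + 2 * (ZMod.cast a.2.2 : ZMod (2 ^ (t + 1))),
   a.1)

/-- The subset `H' = {(x,0,z) : x a unit}`. -/
def changH' (r t : ℕ) :
    Set (ZMod (2 ^ (r + 1)) × ZMod (2 ^ (t + 1)) × ZMod (2 ^ t)) :=
  {a | IsUnit a.1 ∧ a.2.1 = 0}

/-!
Write `φ₁(x,y,z) = π(x) + μ(z)` for the first component of `φ`. Everything rests on three facts
about the doubling map `μ`: `μ(π w) = 2w` for `w ∈ ℤ/2^{t+1}`, `μ` is injective, and the
difference of two units of `ℤ/2^{t+1}` is even, hence in the image of `μ`.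

Expanding with the first fact gives `φ₁(a∘b) = φ₁(a)φ₁(b)`. The middle coordinates of `a∘b` are
`φ₁(a)y' + π(x')y` and `π(φ₁ a)z' + π(x')z`, and `φ₁(a)` is a unit whenever `x` is because `2` is
nilpotent; so these equations can be solved for a two-sided inverse, and `E'` consists of the
triples with `x` a unit. Injectivity of `μ` gives the kernel and the injectivity of `φ` on `H'`;
the parity fact makes `φ` surjective on `H'`, and since `H'` is closed under `∘` the inverse of
`φ|H'` is multiplicative.
-/

open scoped Ring

lemma isNilpotent_two_zmod_two_pow (k : ℕ) : IsNilpotent (2 : ZMod (2 ^ k)) :=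
  ⟨k, by exact_mod_cast ZMod.natCast_self (2 ^ k)⟩

lemma isUnit_add_two_mul {R : Type*} [CommRing R] (h2 : IsNilpotent (2 : R)) {u : R}
    (hu : IsUnit u) (v : R) : IsUnit (u + 2 * v) :=
  ((Commute.all _ _).isNilpotent_mul_right h2).isUnit_add_left_of_commute hu (Commute.all _ _)

lemma two_mul_cast_eq_of_castHom_eq {k : ℕ} {w : ZMod (2 ^ (k + 1))} {z : ZMod (2 ^ k)}
    (hwz : ZMod.castHom (pow_dvd_pow 2 k.le_succ) _ w = z) :
    2 * (ZMod.cast z : ZMod (2 ^ (k + 1))) = 2 * w := by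
  subst hwz
  have h2k : (2 : ZMod (2 ^ (k + 1))) * 2 ^ k = 0 := by
    rw [← pow_succ']; exact_mod_cast ZMod.natCast_self (2 ^ (k + 1))
  rw [← ZMod.natCast_zmod_val w, map_natCast, ZMod.cast_eq_val, ZMod.val_natCast]
  conv_rhs => rw [← Nat.mod_add_div w.val (2 ^ k)]
  push_cast
  linear_combination (-(w.val / 2 ^ k : ℕ) : ZMod (2 ^ (k + 1))) * h2k

lemma two_mul_cast_injective (k : ℕ) :
    Function.Injective fun z : ZMod (2 ^ k) => 2 * (ZMod.cast z : ZMod (2 ^ (k + 1))) := by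
  intro z z' hzz'
  have hval : ∀ w : ZMod (2 ^ k),
      (2 * (ZMod.cast w : ZMod (2 ^ (k + 1)))).val = 2 * w.val := fun w => by
    have hlt : 2 * w.val < 2 ^ (k + 1) := by rw [pow_succ]; have := w.val_lt; omega
    rw [ZMod.cast_eq_val, ← ZMod.val_natCast_of_lt hlt]
    push_cast; rfl
  have := congrArg ZMod.val hzz'
  simp only [hval] at this
  exact ZMod.val_injective _ (by omega)

lemma two_dvd_val_sub_of_isUnit {k : ℕ} {u v : ZMod (2 ^ (k + 1))} (hu : IsUnit u)
    (hv : IsUnit v) : 2 ∣ (u - v).val := by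
  have h2 : ∀ w : ZMod 2, w ≠ 0 → w = 1 := by decide
  let π := ZMod.castHom (dvd_pow_self 2 k.succ_ne_zero) (ZMod 2)
  have hπ : π (u - v) = 0 := by
    rw [map_sub, h2 _ (hu.map π).ne_zero, h2 _ (hv.map π).ne_zero, sub_self]
  rwa [ZMod.castHom_apply, ZMod.cast_eq_val, ZMod.natCast_eq_zero_iff] at hπ

lemma castHom_castHom {a b c : ℕ} (hab : a ∣ b) (hbc : b ∣ c) (x : ZMod c) :
    ZMod.castHom hab (ZMod a) (ZMod.castHom hbc (ZMod b) x) = ZMod.castHom (hab.trans hbc) _ x := by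
  rw [← RingHom.comp_apply, ZMod.castHom_comp]

lemma castHom_cast {k : ℕ} (z : ZMod (2 ^ k)) :
    ZMod.castHom (pow_dvd_pow 2 k.le_succ) _ (ZMod.cast z : ZMod (2 ^ (k + 1))) = z :=
  ZMod.cast_cast_zmod_of_le (Nat.pow_le_pow_right two_pos k.le_succ) z

section Chang

variable {r t : ℕ} (h : t ≤ r)

lemma changPhi'_changOp' (a b : ZMod (2 ^ (r + 1)) × ZMod (2 ^ (t + 1)) × ZMod (2 ^ t)) :
    changPhi' r t h (changOp' r t h a b)
      = ((changPhi' r t h a).1 * (changPhi' r t h b).1,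
         (changPhi' r t h a).2 * (changPhi' r t h b).2) := by
  obtain ⟨x, y, z⟩ := a
  obtain ⟨x', y', z'⟩ := b
  refine Prod.ext ?_ rfl
  let πA := ZMod.castHom (pow_dvd_pow 2 (by omega : t + 1 ≤ r + 1)) (ZMod (2 ^ (t + 1)))
  have hμ := two_mul_cast_eq_of_castHom_eq (k := t)
    (w := πA x * ZMod.cast z' + πA x' * ZMod.cast z + 2 * ZMod.cast z * ZMod.cast z')
    (z := (changOp' r t h (x, y, z) (x', y', z')).2.2) (by
      simp only [changOp', map_add, map_mul, map_ofNat, castHom_castHom, πA, castHom_cast])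
  simp only [changPhi', changOp', map_mul] at hμ ⊢
  linear_combination hμ

variable {a b : ZMod (2 ^ (r + 1)) × ZMod (2 ^ (t + 1)) × ZMod (2 ^ t)}

lemma changPhi'_one_zero (y : ZMod (2 ^ (t + 1))) : changPhi' r t h (1, y, 0) = (1, 1) := by
  simp only [changPhi', map_one, ZMod.cast_zero, mul_zero, add_zero]

lemma changOp'_snd_fst :
    (changOp' r t h a b).2.1 = (changPhi' r t h a).1 * b.2.1
      + ZMod.castHom (pow_dvd_pow 2 (by omega : t + 1 ≤ r + 1)) _ b.1 * a.2.1 := by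
  simp only [changOp', changPhi']
  ring

lemma changOp'_snd_snd :
    (changOp' r t h a b).2.2
      = ZMod.castHom (pow_dvd_pow 2 t.le_succ) _ (changPhi' r t h a).1 * b.2.2
        + ZMod.castHom (pow_dvd_pow 2 (by omega : t ≤ r + 1)) _ b.1 * a.2.2 := by
  simp only [changOp', changPhi', map_add, map_mul, map_ofNat, castHom_castHom, castHom_cast]
  ring

noncomputable def changInv' (a : ZMod (2 ^ (r + 1)) × ZMod (2 ^ (t + 1)) × ZMod (2 ^ t)) :
    ZMod (2 ^ (r + 1)) × ZMod (2 ^ (t + 1)) × ZMod (2 ^ t) :=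
  (a.1⁻¹ʳ,
   -((changPhi' r t h a).1⁻¹ʳ
      * ZMod.castHom (pow_dvd_pow 2 (by omega : t + 1 ≤ r + 1)) _ a.1⁻¹ʳ * a.2.1),
   -(ZMod.castHom (pow_dvd_pow 2 t.le_succ) _ (changPhi' r t h a).1⁻¹ʳ
      * ZMod.castHom (pow_dvd_pow 2 (by omega : t ≤ r + 1)) _ a.1⁻¹ʳ * a.2.2))

lemma isUnit_changPhi'_fst (ha : IsUnit a.1) : IsUnit (changPhi' r t h a).1 :=
  isUnit_add_two_mul (isNilpotent_two_zmod_two_pow _) (ha.map _) _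

lemma changOp'_changInv' (ha : IsUnit a.1) : changOp' r t h a (changInv' h a) = (1, 0, 0) := by
  have hx := Ring.mul_inverse_cancel _ ha
  have hp := Ring.mul_inverse_cancel _ (isUnit_changPhi'_fst h ha)
  refine Prod.ext hx (Prod.ext ?_ ?_)
  · rw [changOp'_snd_fst]
    simp only [changInv']
    linear_combination
      -(ZMod.castHom (pow_dvd_pow 2 (by omega : t + 1 ≤ r + 1)) _ a.1⁻¹ʳ * a.2.1) * hp
  · rw [changOp'_snd_snd]
    simp only [changInv']
    have hpB : ZMod.castHom (pow_dvd_pow 2 t.le_succ) (ZMod (2 ^ t)) (changPhi' r t h a).1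
        * ZMod.castHom (pow_dvd_pow 2 t.le_succ) _ (changPhi' r t h a).1⁻¹ʳ = 1 := by
      rw [← map_mul, hp, map_one]
    linear_combination
      -(ZMod.castHom (pow_dvd_pow 2 (by omega : t ≤ r + 1)) _ a.1⁻¹ʳ * a.2.2) * hpB

lemma changOp'_changInv'_self (ha : IsUnit a.1) :
    changOp' r t h (changInv' h a) a = (1, 0, 0) := by
  have hp := Ring.inverse_mul_cancel _ (isUnit_changPhi'_fst h ha)
  have hφ : (changPhi' r t h a).1 * (changPhi' r t h (changInv' h a)).1 = 1 := by
    simpa [changOp'_changInv' h ha, changPhi'_one_zero] using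
      congrArg Prod.fst (changPhi'_changOp' h a (changInv' h a)).symm
  have hφb : (changPhi' r t h (changInv' h a)).1 = (changPhi' r t h a).1⁻¹ʳ := by
    linear_combination (changPhi' r t h a).1⁻¹ʳ * hφ - (changPhi' r t h (changInv' h a)).1 * hp
  have hxA : ZMod.castHom (pow_dvd_pow 2 (by omega : t + 1 ≤ r + 1)) (ZMod (2 ^ (t + 1))) a.1
      * ZMod.castHom (pow_dvd_pow 2 (by omega : t + 1 ≤ r + 1)) _ a.1⁻¹ʳ = 1 := by
    rw [← map_mul, Ring.mul_inverse_cancel _ ha, map_one]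
  have hxB : ZMod.castHom (pow_dvd_pow 2 (by omega : t ≤ r + 1)) (ZMod (2 ^ t)) a.1
      * ZMod.castHom (pow_dvd_pow 2 (by omega : t ≤ r + 1)) _ a.1⁻¹ʳ = 1 := by
    rw [← map_mul, Ring.mul_inverse_cancel _ ha, map_one]
  refine Prod.ext (Ring.inverse_mul_cancel _ ha) (Prod.ext ?_ ?_)
  · rw [changOp'_snd_fst, hφb]
    simp only [changInv']
    linear_combination -((changPhi' r t h a).1⁻¹ʳ * a.2.1) * hxA
  · rw [changOp'_snd_snd, hφb]
    simp only [changInv']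
    linear_combination
      -(ZMod.castHom (pow_dvd_pow 2 t.le_succ) _ (changPhi' r t h a).1⁻¹ʳ * a.2.2) * hxB

lemma mem_changE'_iff : a ∈ changE' r t h ↔ IsUnit a.1 :=
  ⟨fun ⟨b, hab, _⟩ => IsUnit.of_mul_eq_one b.1 (congrArg Prod.fst hab),
   fun ha => ⟨changInv' h a, changOp'_changInv' h ha, changOp'_changInv'_self h ha⟩⟩

lemma changPhi'_eq_one_one_iff : changPhi' r t h a = (1, 1) ↔ ∃ y, a = (1, y, 0) := by
  refine ⟨fun hφ => ?_, fun ⟨y, hy⟩ => hy ▸ changPhi'_one_zero h y⟩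
  have hx : a.1 = 1 := congrArg Prod.snd hφ
  have hz : a.2.2 = 0 := two_mul_cast_injective t <| by
    have := congrArg Prod.fst hφ
    simp only [changPhi', hx, map_one, add_eq_left] at this
    simpa only [ZMod.cast_zero, mul_zero] using this
  exact ⟨a.2.1, Prod.ext hx (Prod.ext rfl hz)⟩

lemma natCard_changPhi'_eq_one_one :
    Nat.card {a : ZMod (2 ^ (r + 1)) × ZMod (2 ^ (t + 1)) × ZMod (2 ^ t) //
      a ∈ changE' r t h ∧ changPhi' r t h a = (1, 1)} = 2 ^ (t + 1) := by
  have hker : ∀ a, a ∈ changE' r t h ∧ changPhi' r t h a = (1, 1) ↔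
      a ∈ Set.range fun y : ZMod (2 ^ (t + 1)) =>
        ((1 : ZMod (2 ^ (r + 1))), y, (0 : ZMod (2 ^ t))) := by
    intro a
    rw [mem_changE'_iff, changPhi'_eq_one_one_iff]
    constructor
    · rintro ⟨-, y, rfl⟩
      exact ⟨y, rfl⟩
    · rintro ⟨y, rfl⟩
      exact ⟨isUnit_one, y, rfl⟩
  rw [Nat.card_congr (Equiv.subtypeEquivRight hker),
    Nat.card_range_of_injective fun y y' hyy' => congrArg (fun a => a.2.1) hyy', Nat.card_zmod]

lemma changOp'_one_one_zero_iterate (n : ℕ) :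
    (fun b => changOp' r t h (1, 1, 0) b)^[n] (1, 0, 0) = (1, (n : ZMod (2 ^ (t + 1))), 0) := by
  induction n with
  | zero => simp
  | succ n ih =>
    rw [Function.iterate_succ_apply', ih]
    simp only [changOp', map_one, one_mul, mul_one, ZMod.cast_zero, mul_zero, add_zero,
      Nat.cast_succ, add_comm, zero_add]

lemma changOp'_mem_changH' (ha : a ∈ changH' r t) (hb : b ∈ changH' r t) :
    changOp' r t h a b ∈ changH' r t :=
  ⟨ha.1.mul hb.1, by rw [changOp'_snd_fst, ha.2, hb.2, mul_zero, mul_zero, add_zero]⟩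

lemma changInv'_mem_changH' (ha : a ∈ changH' r t) : changInv' h a ∈ changH' r t :=
  ⟨ha.1.ringInverse, by simp only [changInv', ha.2, mul_zero, neg_zero]⟩

lemma changPhi'_injOn_changH' : Set.InjOn (changPhi' r t h) (changH' r t) := by
  intro a ha b hb hab
  have hx : a.1 = b.1 := congrArg Prod.snd hab
  have hz : a.2.2 = b.2.2 := two_mul_cast_injective t <| by
    have := congrArg Prod.fst hab
    simp only [changPhi', hx] at this
    exact add_left_cancel this
  exact Prod.ext hx (Prod.ext (ha.2.trans hb.2.symm) hz)

def changSection' (p : ZMod (2 ^ (t + 1)) × ZMod (2 ^ (r + 1))) :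
    ZMod (2 ^ (r + 1)) × ZMod (2 ^ (t + 1)) × ZMod (2 ^ t) :=
  (p.2, 0,
   (((p.1 - ZMod.castHom (pow_dvd_pow 2 (Nat.succ_le_succ h)) _ p.2).val / 2 : ℕ) : ZMod (2 ^ t)))

variable {u u' : ZMod (2 ^ (t + 1))} {v v' : ZMod (2 ^ (r + 1))}

lemma changSection'_mem_changH' (hv : IsUnit v) : changSection' h (u, v) ∈ changH' r t :=
  ⟨hv, rfl⟩

lemma changPhi'_changSection' (hu : IsUnit u) (hv : IsUnit v) :
    changPhi' r t h (changSection' h (u, v)) = (u, v) := by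
  refine Prod.ext ?_ rfl
  set e := u - ZMod.castHom (pow_dvd_pow 2 (Nat.succ_le_succ h)) (ZMod (2 ^ (t + 1))) v with he
  have hhalf : (2 : ZMod (2 ^ (t + 1))) * ((e.val / 2 : ℕ) : ZMod (2 ^ (t + 1))) = e := by
    calc (2 : ZMod (2 ^ (t + 1))) * ((e.val / 2 : ℕ) : ZMod (2 ^ (t + 1)))
        = ((2 * (e.val / 2) : ℕ) : ZMod (2 ^ (t + 1))) := by push_cast; rfl
      _ = e := by
        rw [Nat.mul_div_cancel' (two_dvd_val_sub_of_isUnit hu (hv.map _)), ZMod.natCast_zmod_val]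
  simp only [changPhi', changSection']
  rw [two_mul_cast_eq_of_castHom_eq (map_natCast _ _), hhalf, he]
  ring

lemma changSection'_mul (hu : IsUnit u) (hv : IsUnit v) (hu' : IsUnit u') (hv' : IsUnit v') :
    changSection' h (u * u', v * v')
      = changOp' r t h (changSection' h (u, v)) (changSection' h (u', v')) :=
  changPhi'_injOn_changH' h (changSection'_mem_changH' h (hv.mul hv'))
    (changOp'_mem_changH' h (changSection'_mem_changH' h hv) (changSection'_mem_changH' h hv'))
    <| by
      rw [changPhi'_changSection' h (hu.mul hu') (hv.mul hv'), changPhi'_changOp',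
        changPhi'_changSection' h hu hv, changPhi'_changSection' h hu' hv']

end Chang

theorem stmt8_general (r t : ℕ) (htr : t < r) :
    -- φ is multiplicative on E'(r,t)
    (∀ a ∈ changE' r t htr.le, ∀ b ∈ changE' r t htr.le,
      changPhi' r t htr.le (changOp' r t htr.le a b)
        = ((changPhi' r t htr.le a).1 * (changPhi' r t htr.le b).1,
           (changPhi' r t htr.le a).2 * (changPhi' r t htr.le b).2)) ∧
    -- φ maps E'(r,t) into the product of unit groups
    (∀ a ∈ changE' r t htr.le,
      IsUnit (changPhi' r t htr.le a).1 ∧ IsUnit (changPhi' r t htr.le a).2) ∧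
    -- φ is surjective onto the product of unit groups
    (∀ u : ZMod (2 ^ (t + 1)), ∀ v : ZMod (2 ^ (r + 1)), IsUnit u → IsUnit v →
      ∃ a ∈ changE' r t htr.le, changPhi' r t htr.le a = (u, v)) ∧
    -- the kernel of φ is exactly {(1, y, 0)}
    (∀ a ∈ changE' r t htr.le,
      (changPhi' r t htr.le a = (1, 1) ↔ ∃ y : ZMod (2 ^ (t + 1)), a = (1, y, 0))) ∧
    (∀ y : ZMod (2 ^ (t + 1)), (1, y, 0) ∈ changE' r t htr.le) ∧
    -- the kernel has order 2^{t+1}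
    Nat.card {a : ZMod (2 ^ (r + 1)) × ZMod (2 ^ (t + 1)) × ZMod (2 ^ t) //
        a ∈ changE' r t htr.le ∧ changPhi' r t htr.le a = (1, 1)} = 2 ^ (t + 1) ∧
    -- the kernel is cyclic, generated by (1,1,0)
    (∀ a ∈ changE' r t htr.le, changPhi' r t htr.le a = (1, 1) →
      ∃ n : ℕ, a = (fun b => changOp' r t htr.le (1, 1, 0) b)^[n] (1, 0, 0)) ∧
    -- H' is a subgroup of E'(r,t)
    changH' r t ⊆ changE' r t htr.le ∧
    (1, 0, 0) ∈ changH' r t ∧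
    (∀ a ∈ changH' r t, ∀ b ∈ changH' r t, changOp' r t htr.le a b ∈ changH' r t) ∧
    (∀ a ∈ changH' r t, ∃ b ∈ changH' r t,
      changOp' r t htr.le a b = (1, 0, 0) ∧ changOp' r t htr.le b a = (1, 0, 0)) ∧
    -- φ restricted to H' is a bijection onto the product of unit groups
    (∀ a ∈ changH' r t, ∀ b ∈ changH' r t,
      changPhi' r t htr.le a = changPhi' r t htr.le b → a = b) ∧
    (∀ u : ZMod (2 ^ (t + 1)), ∀ v : ZMod (2 ^ (r + 1)), IsUnit u → IsUnit v →
      ∃ a ∈ changH' r t, changPhi' r t htr.le a = (u, v)) ∧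
    -- hence φ admits a multiplicative section with values in H': the sequence splits
    (∃ s : ZMod (2 ^ (t + 1)) × ZMod (2 ^ (r + 1)) →
        ZMod (2 ^ (r + 1)) × ZMod (2 ^ (t + 1)) × ZMod (2 ^ t),
      (∀ u : ZMod (2 ^ (t + 1)), ∀ v : ZMod (2 ^ (r + 1)), IsUnit u → IsUnit v →
        s (u, v) ∈ changH' r t ∧ changPhi' r t htr.le (s (u, v)) = (u, v)) ∧
      (∀ u u' : ZMod (2 ^ (t + 1)), ∀ v v' : ZMod (2 ^ (r + 1)),
        IsUnit u → IsUnit v → IsUnit u' → IsUnit v' →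
        s (u * u', v * v') = changOp' r t htr.le (s (u, v)) (s (u', v')))) := by
  have hE : ∀ a, a ∈ changE' r t htr.le ↔ IsUnit a.1 := fun a => mem_changE'_iff htr.le
  refine ⟨fun a _ b _ => changPhi'_changOp' htr.le a b,
    fun a ha => ⟨isUnit_changPhi'_fst htr.le ((hE a).1 ha), (hE a).1 ha⟩,
    fun u v hu hv => ⟨_, (hE _).2 hv, changPhi'_changSection' htr.le hu hv⟩,
    fun a _ => changPhi'_eq_one_one_iff htr.le,
    fun y => (hE _).2 isUnit_one,
    natCard_changPhi'_eq_one_one htr.le,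
    fun a _ ha => ?_,
    fun a ha => (hE a).2 ha.1,
    ⟨isUnit_one, rfl⟩,
    fun a ha b hb => changOp'_mem_changH' htr.le ha hb,
    fun a ha => ⟨changInv' htr.le a, changInv'_mem_changH' htr.le ha,
      changOp'_changInv' htr.le ha.1, changOp'_changInv'_self htr.le ha.1⟩,
    fun a ha b hb => changPhi'_injOn_changH' htr.le ha hb,
    fun u v hu hv =>
      ⟨_, changSection'_mem_changH' htr.le hv, changPhi'_changSection' htr.le hu hv⟩,
    changSection' htr.le,
    fun u v hu hv => ⟨changSection'_mem_changH' htr.le hv, changPhi'_changSection' htr.le hu hv⟩,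
    fun u u' v v' hu hv hu' hv' => changSection'_mul htr.le hu hv hu' hv'⟩
  obtain ⟨y, rfl⟩ := (changPhi'_eq_one_one_iff htr.le).1 ha
  exact ⟨y.val, by rw [changOp'_one_one_zero_iterate, ZMod.natCast_zmod_val]⟩

/-- For `r > t ≥ 1`, the map `φ(x,y,z) = (π(x) + μ(z), x)` is a surjective group
homomorphism `E'(r,t) → (ℤ/2^{t+1})ˣ × (ℤ/2^{r+1})ˣ` with kernel
`{(1,y,0) : y ∈ ℤ/2^{t+1}}`, a cyclic subgroup of order `2^{t+1}` generated by
`(1,1,0)`; moreover `H' = {(x,0,z) : x a unit}` is a subgroup of `E'(r,t)` and `φ`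
restricts to an isomorphism of `H'` onto `(ℤ/2^{t+1})ˣ × (ℤ/2^{r+1})ˣ`, so the short
exact sequence `ℤ/2^{t+1} ↪ E'(r,t) ↠ (ℤ/2^{t+1})ˣ × (ℤ/2^{r+1})ˣ` splits. -/
theorem stmt8 (r t : ℕ) (ht : 1 ≤ t) (htr : t < r) :
    -- φ is multiplicative on E'(r,t)
    (∀ a ∈ changE' r t htr.le, ∀ b ∈ changE' r t htr.le,
      changPhi' r t htr.le (changOp' r t htr.le a b)
        = ((changPhi' r t htr.le a).1 * (changPhi' r t htr.le b).1,
           (changPhi' r t htr.le a).2 * (changPhi' r t htr.le b).2)) ∧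
    -- φ maps E'(r,t) into the product of unit groups
    (∀ a ∈ changE' r t htr.le,
      IsUnit (changPhi' r t htr.le a).1 ∧ IsUnit (changPhi' r t htr.le a).2) ∧
    -- φ is surjective onto the product of unit groups
    (∀ u : ZMod (2 ^ (t + 1)), ∀ v : ZMod (2 ^ (r + 1)), IsUnit u → IsUnit v →
      ∃ a ∈ changE' r t htr.le, changPhi' r t htr.le a = (u, v)) ∧
    -- the kernel of φ is exactly {(1, y, 0)}
    (∀ a ∈ changE' r t htr.le,
      (changPhi' r t htr.le a = (1, 1) ↔ ∃ y : ZMod (2 ^ (t + 1)), a = (1, y, 0))) ∧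
    (∀ y : ZMod (2 ^ (t + 1)), (1, y, 0) ∈ changE' r t htr.le) ∧
    -- the kernel has order 2^{t+1}
    Nat.card {a : ZMod (2 ^ (r + 1)) × ZMod (2 ^ (t + 1)) × ZMod (2 ^ t) //
        a ∈ changE' r t htr.le ∧ changPhi' r t htr.le a = (1, 1)} = 2 ^ (t + 1) ∧
    -- the kernel is cyclic, generated by (1,1,0)
    (∀ a ∈ changE' r t htr.le, changPhi' r t htr.le a = (1, 1) →
      ∃ n : ℕ, a = (fun b => changOp' r t htr.le (1, 1, 0) b)^[n] (1, 0, 0)) ∧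
    -- H' is a subgroup of E'(r,t)
    changH' r t ⊆ changE' r t htr.le ∧
    (1, 0, 0) ∈ changH' r t ∧
    (∀ a ∈ changH' r t, ∀ b ∈ changH' r t, changOp' r t htr.le a b ∈ changH' r t) ∧
    (∀ a ∈ changH' r t, ∃ b ∈ changH' r t,
      changOp' r t htr.le a b = (1, 0, 0) ∧ changOp' r t htr.le b a = (1, 0, 0)) ∧
    -- φ restricted to H' is a bijection onto the product of unit groups
    (∀ a ∈ changH' r t, ∀ b ∈ changH' r t,
      changPhi' r t htr.le a = changPhi' r t htr.le b → a = b) ∧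
    (∀ u : ZMod (2 ^ (t + 1)), ∀ v : ZMod (2 ^ (r + 1)), IsUnit u → IsUnit v →
      ∃ a ∈ changH' r t, changPhi' r t htr.le a = (u, v)) ∧
    -- hence φ admits a multiplicative section with values in H': the sequence splits
    (∃ s : ZMod (2 ^ (t + 1)) × ZMod (2 ^ (r + 1)) →
        ZMod (2 ^ (r + 1)) × ZMod (2 ^ (t + 1)) × ZMod (2 ^ t),
      (∀ u : ZMod (2 ^ (t + 1)), ∀ v : ZMod (2 ^ (r + 1)), IsUnit u → IsUnit v →
        s (u, v) ∈ changH' r t ∧ changPhi' r t htr.le (s (u, v)) = (u, v)) ∧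
      (∀ u u' : ZMod (2 ^ (t + 1)), ∀ v v' : ZMod (2 ^ (r + 1)),
        IsUnit u → IsUnit v → IsUnit u' → IsUnit v' →
        s (u * u', v * v') = changOp' r t htr.le (s (u, v)) (s (u', v')))) :=
  stmt8_general r t htr
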